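/- The transversal CNOT implements the logical CNOT on the Steane code: letting U denote the product over i = 1,…,7 of the CNOT gate with control the i-th qubit of the first 7-qubit block and target the i-th qubit of the second 7-qubit block, one has U(|a_L⟩ ⊗ |b_L⟩) = |a_L⟩ ⊗ |(a⊕b)_L⟩ for all a, b ∈ {0,1}. -/

import Mathlib

/-- The 3×7 parity-check matrix of the [7,4] Hamming code over F₂. -/
def Hmat : Matrix (Fin 3) (Fin 7) (ZMod 2) :=
  !![1,0,1,0,1,0,1; 0,1,1,0,0,1,1; 0,0,0,1,1,1,1]

/-- The Steane logical state `|a_L⟩` for `a ∈ {0,1}`: the equally weighted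
superposition `(1/√8) Σ |v⟩` over all Hamming codewords `v` whose Hamming weight
has parity `a`. -/
noncomputable def ketL (a : ZMod 2) : (Fin 7 → ZMod 2) → ℂ := fun w =>
  if Hmat.mulVec w = 0 ∧ (hammingNorm w : ZMod 2) = a then (Real.sqrt 8 : ℂ)⁻¹ else 0

/-- States of the 14-qubit Hilbert space `(ℂ²)^{⊗7} ⊗ (ℂ²)^{⊗7}`, represented as
functions of the pair of basis labels. -/
abbrev St2 := (Fin 7 → ZMod 2) → (Fin 7 → ZMod 2) → ℂ

/-- The tensor product of two 7-qubit states. -/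
noncomputable def tens (φ ψ : (Fin 7 → ZMod 2) → ℂ) : St2 := fun u w => φ u * ψ w

/-- The CNOT gate with control the `i`-th qubit of the first block and target the
`i`-th qubit of the second block (a self-inverse basis permutation `|x⟩|y⟩ ↦
|x⟩|y⊕x⟩` on the `i`-th qubit pair). -/
def cnotOp (i : Fin 7) (ψ : St2) : St2 :=
  fun u w => ψ u (Function.update w i (w i + u i))

/-- The transversal CNOT: the product over `i = 1,…,7` of the CNOT gates
`cnotOp i`. -/
def transCNOT : St2 → St2 :=
  (List.finRange 7).foldr (fun i f => cnotOp i ∘ f) id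

/-!
The transversal CNOT acts on basis labels as `(u, w) ↦ (u, w + u)`. If `u` is a codeword of
weight parity `a`, translating by `u` maps the codewords of parity `c` bijectively onto those
of parity `c + a`, because the Hamming code is linear and the weight parity is additive.
-/

lemma transCNOT_apply (ψ : St2) (u w : Fin 7 → ZMod 2) :
    transCNOT ψ u w = ψ u (w + u) := by
  change ψ u _ = ψ u (w + u)
  congr 1
  funext j
  fin_cases j <;> simp [Function.update, Fin.ext_iff]

lemma natCast_hammingNorm_eq_sum {ι : Type*} [Fintype ι] (w : ι → ZMod 2) :
    (hammingNorm w : ZMod 2) = ∑ i, w i := by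
  rw [hammingNorm, Finset.card_eq_sum_ones, Nat.cast_sum, Finset.sum_filter]
  refine Finset.sum_congr rfl fun i _ => ?_
  generalize w i = x
  fin_cases x <;> rfl

lemma natCast_hammingNorm_add {ι : Type*} [Fintype ι] (v w : ι → ZMod 2) :
    (hammingNorm (v + w) : ZMod 2) = hammingNorm v + hammingNorm w := by
  simp only [natCast_hammingNorm_eq_sum, Pi.add_apply, Finset.sum_add_distrib]

lemma ketL_add_codeword (c : ZMod 2) {u : Fin 7 → ZMod 2} (hu : Hmat.mulVec u = 0)
    (w : Fin 7 → ZMod 2) : ketL c (w + u) = ketL (c - hammingNorm u) w := by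
  simp only [ketL, Matrix.mulVec_add, hu, add_zero, natCast_hammingNorm_add, eq_sub_iff_add_eq]

/-- The transversal CNOT implements the logical CNOT on the Steane code:
`U(|a_L⟩ ⊗ |b_L⟩) = |a_L⟩ ⊗ |(a⊕b)_L⟩` for all `a, b ∈ {0,1}`. -/
theorem transversal_CNOT_is_logical_CNOT :
    ∀ a b : ZMod 2, transCNOT (tens (ketL a) (ketL b)) = tens (ketL a) (ketL (a + b)) := by
  intro a b
  funext u w
  rw [transCNOT_apply]
  refine mul_eq_mul_left_iff.mpr ?_
  by_cases hu : Hmat.mulVec u = 0 ∧ (hammingNorm u : ZMod 2) = a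
  · left
    rw [ketL_add_codeword b hu.1, hu.2, CharTwo.sub_eq_add, add_comm]
  · right
    simp only [ketL, hu, if_false]
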